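/- Let G = H₁ ∗_K H₂ be an amalgamated free product. If w = (β₁, …, β_l) and w' = (β₁', …, β_k') are two reduced syllabic expressions of the same element α ∈ G, then k = l and there exist γ₀, γ₁, …, γ_l ∈ K with γ₀ = γ_l = 1 and β_i' γ_i = γ_{i-1} β_i for all i. In particular, α = 1 if and only if its reduced expression is the empty sequence. -/

import Mathlib

open Monoid

/-- The element of the amalgamated free product represented by a syllabic expression,
i.e. a list of syllables, each lying in one of the two factors. -/
def syllProd {K : Type} [Group K] {H : Bool → Type} [∀ b, Group (H b)]
    (φ : ∀ b, K →* H b) (w : List ((b : Bool) × H b)) : PushoutI φ :=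
  (w.map fun β => PushoutI.of (φ := φ) β.1 β.2).prod

/-- A syllabic expression is reduced if it is empty, or is a single nontrivial syllable,
or consecutive syllables lie in different factors and no syllable lies in (the image of)
the amalgamated subgroup `K`. -/
def IsReducedSyll {K : Type} [Group K] {H : Bool → Type} [∀ b, Group (H b)]
    (φ : ∀ b, K →* H b) (w : List ((b : Bool) × H b)) : Prop :=
  w = [] ∨ (∃ β : (b : Bool) × H b, w = [β] ∧ β.2 ≠ 1) ∨
    (w.Chain' (fun β β' => β.1 ≠ β'.1) ∧ ∀ β ∈ w, β.2 ∉ Set.range (φ β.1))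

/-!
By the normal form theorem (`PushoutI.Reduced.eq_empty_of_mem_range`), a nonempty reduced
expression none of whose syllables lies in `K` does not represent an element of `K`.
If `β :: t` and `β' :: t'` are such expressions of the same element, then
`t'⁻¹ β'⁻¹ β t = 1`. Unless `β` and `β'` lie in the same factor with `β'⁻¹ β ∈ K`, this
expression (with `β'⁻¹ β` merged into one syllable when they share a factor) is again nonempty
and of that kind, which is impossible. Hence `β = β' γ₁` with `γ₁ ∈ K`, so `γ₁ t = t'`, and
induction (with a leading element of `K` in the hypothesis) produces the whole sequence `γ`.
A single syllable in `K` is treated apart.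
-/

open PushoutI

section

variable {K : Type} [Group K] {H : Bool → Type} [∀ b, Group (H b)] {φ : ∀ b, K →* H b}

variable (φ) in
/-- Unlike `IsReducedSyll`, this is closed under tails, inversion and gluing along a junction of
distinct factors, and it is Mathlib's `PushoutI.Reduced` for words. -/
def IsStrictlyReducedSyll (w : List ((b : Bool) × H b)) : Prop :=
  w.IsChain (fun β β' => β.1 ≠ β'.1) ∧ ∀ β ∈ w, β.2 ∉ Set.range (φ β.1)

variable (φ) in
/-- The paper's `β'ᵢ γᵢ = γᵢ₋₁ βᵢ`, with syllables indexed from `0`. -/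
def SyllablesLinkedBy (γ : ℕ → K) (w w' : List ((b : Bool) × H b)) : Prop :=
  ∀ i, i < w.length →
    of (φ := φ) (w'.getD i ⟨true, 1⟩).1 (w'.getD i ⟨true, 1⟩).2 * base φ (γ (i + 1))
      = base φ (γ i) * of (φ := φ) (w.getD i ⟨true, 1⟩).1 (w.getD i ⟨true, 1⟩).2

def syllInv (β : (b : Bool) × H b) : (b : Bool) × H b := ⟨β.1, β.2⁻¹⟩

@[simp]
lemma syllProd_nil : syllProd φ [] = 1 := rfl

@[simp]
lemma syllProd_cons (β : (b : Bool) × H b) (w : List ((b : Bool) × H b)) :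
    syllProd φ (β :: w) = of β.1 β.2 * syllProd φ w :=
  List.prod_cons

@[simp]
lemma syllProd_append (u v : List ((b : Bool) × H b)) :
    syllProd φ (u ++ v) = syllProd φ u * syllProd φ v := by
  simp [syllProd]

@[simp]
lemma syllProd_reverse_map_syllInv (w : List ((b : Bool) × H b)) :
    syllProd φ (w.map syllInv).reverse = (syllProd φ w)⁻¹ := by
  induction w with
  | nil => simp
  | cons β w ih => simp [syllInv, ih]

lemma syllProd_singleton_eq_base (b : Bool) (k : K) : syllProd φ [⟨b, φ b k⟩] = base φ k := by
  simp [of_apply_eq_base]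

lemma SyllablesLinkedBy.cons {γ : ℕ → K} {t t' : List ((b : Bool) × H b)}
    (h : SyllablesLinkedBy φ γ t t') {β β' : (b : Bool) × H b} {k : K}
    (hβ : of (φ := φ) β'.1 β'.2 * base φ (γ 0) = base φ k * of β.1 β.2) :
    SyllablesLinkedBy φ (fun | 0 => k | i + 1 => γ i) (β :: t) (β' :: t') := by
  rintro (_ | i) hi
  · exact hβ
  · exact h i (Nat.lt_of_succ_lt_succ hi)

namespace IsStrictlyReducedSyll

lemma tail {β : (b : Bool) × H b} {w : List ((b : Bool) × H b)}
    (h : IsStrictlyReducedSyll φ (β :: w)) : IsStrictlyReducedSyll φ w :=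
  ⟨h.1.tail, fun x hx => h.2 x (List.mem_cons_of_mem _ hx)⟩

lemma replace_head {b : Bool} {g g' : H b} {w : List ((b : Bool) × H b)}
    (h : IsStrictlyReducedSyll φ (⟨b, g⟩ :: w)) (hg' : g' ∉ Set.range (φ b)) :
    IsStrictlyReducedSyll φ (⟨b, g'⟩ :: w) := by
  refine ⟨List.isChain_cons.2 ⟨(List.isChain_cons.1 h.1).1, h.1.tail⟩, ?_⟩
  rintro x (_ | ⟨_, hx⟩)
  · exact hg'
  · exact h.2 x (List.mem_cons_of_mem _ hx)

lemma reverse_map_syllInv_append {u v : List ((b : Bool) × H b)}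
    (hu : IsStrictlyReducedSyll φ u) (hv : IsStrictlyReducedSyll φ v)
    (hhead : ∀ α ∈ u.head?, ∀ β ∈ v.head?, α.1 ≠ β.1) :
    IsStrictlyReducedSyll φ ((u.map syllInv).reverse ++ v) := by
  refine ⟨List.isChain_append.2 ⟨?_, hv.1, ?_⟩, ?_⟩
  · rw [List.isChain_reverse, List.isChain_map]
    exact hu.1.imp fun _ _ h => Ne.symm h
  · intro x hx y hy
    rw [List.getLast?_reverse, List.head?_map] at hx
    obtain ⟨α, hα, rfl⟩ := Option.mem_map.1 hx
    exact hhead α hα y hy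
  · simp only [List.mem_append, List.mem_reverse, List.mem_map]
    rintro _ (⟨β, hβ, rfl⟩ | hβ)
    · rintro ⟨k, hk⟩
      exact hu.2 β hβ ⟨k⁻¹, by rw [map_inv, show φ β.1 k = β.2⁻¹ from hk, inv_inv]⟩
    · exact hv.2 _ hβ

lemma eq_nil_of_syllProd_mem_range (hinj : ∀ b, Function.Injective (φ b))
    {w : List ((b : Bool) × H b)} (h : IsStrictlyReducedSyll φ w)
    (hw : syllProd φ w ∈ (base φ).range) : w = [] := by
  let word : CoprodI.Word H :=
    ⟨w, fun β hβ h1 => h.2 β hβ ⟨1, by rw [h1, map_one]⟩, h.1⟩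
  have hred : Reduced φ word := fun β hβ => h.2 β hβ
  have hprod : ofCoprodI word.prod = syllProd φ w := by
    simp [word, CoprodI.Word.prod, syllProd, map_list_prod, Function.comp_def]
  simpa [word] using congrArg CoprodI.Word.toList
    (hred.eq_empty_of_mem_range hinj (hprod ▸ hw))

lemma eq_nil_of_syllProd_eq (hinj : ∀ b, Function.Injective (φ b))
    {u v : List ((b : Bool) × H b)} (hu : IsStrictlyReducedSyll φ u)
    (hv : IsStrictlyReducedSyll φ v) (hhead : ∀ α ∈ u.head?, ∀ β ∈ v.head?, α.1 ≠ β.1)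
    (heq : syllProd φ u = syllProd φ v) : u = [] := by
  have := (hu.reverse_map_syllInv_append hv hhead).eq_nil_of_syllProd_mem_range hinj
    ⟨1, by simp [heq]⟩
  simpa using (List.append_eq_nil_iff.1 this).1

lemma exists_base_of_syllProd_cons_eq (hinj : ∀ b, Function.Injective (φ b))
    {β β' : (b : Bool) × H b} {t t' : List ((b : Bool) × H b)}
    (hw : IsStrictlyReducedSyll φ (β :: t)) (hw' : IsStrictlyReducedSyll φ (β' :: t'))
    (heq : syllProd φ (β :: t) = syllProd φ (β' :: t')) :
    ∃ k, of (φ := φ) β.1 β.2 = of β'.1 β'.2 * base φ k := by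
  obtain ⟨b, g⟩ := β
  obtain ⟨b', g'⟩ := β'
  obtain rfl : b = b' := by
    by_contra hne
    exact List.cons_ne_nil _ _ (eq_nil_of_syllProd_eq hinj hw hw' (by simpa using hne) heq)
  by_contra hk
  have hg : g'⁻¹ * g ∉ Set.range (φ b) := by
    rintro ⟨k, hgk⟩
    exact hk ⟨k, by rw [← of_apply_eq_base φ b, hgk, map_mul, map_inv, mul_inv_cancel_left]⟩
  have hhead : ∀ α ∈ [(⟨b, g'⁻¹ * g⟩ : (b : Bool) × H b)].head?, ∀ β ∈ t'.head?, α.1 ≠ β.1 := by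
    simpa using (List.isChain_cons.1 hw'.1).1
  have hprod : syllProd φ (⟨b, g'⁻¹ * g⟩ :: t) = syllProd φ t' := by
    simp only [syllProd_cons] at heq ⊢
    rw [map_mul, map_inv, mul_assoc, heq, inv_mul_cancel_left]
  exact List.cons_ne_nil _ _ (eq_nil_of_syllProd_eq hinj (hw.replace_head hg) hw'.tail hhead hprod)

theorem exists_syllablesLinkedBy (hinj : ∀ b, Function.Injective (φ b))
    {w w' : List ((b : Bool) × H b)} {k : K} (hw : IsStrictlyReducedSyll φ w)
    (hw' : IsStrictlyReducedSyll φ w') (heq : base φ k * syllProd φ w = syllProd φ w') :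
    w'.length = w.length ∧ ∃ γ : ℕ → K, γ 0 = k ∧ γ w.length = 1 ∧ SyllablesLinkedBy φ γ w w' := by
  induction w generalizing w' k with
  | nil =>
    obtain rfl : w' = [] := hw'.eq_nil_of_syllProd_mem_range hinj ⟨k, by simpa using heq⟩
    obtain rfl : k = 1 := (map_eq_one_iff _ (base_injective hinj)).1 (by simpa using heq)
    exact ⟨rfl, fun _ => 1, rfl, rfl, fun i hi => absurd hi (Nat.not_lt_zero i)⟩
  | cons β t ih =>
    obtain _ | ⟨β', t'⟩ := w'
    · refine absurd (hw.eq_nil_of_syllProd_mem_range hinj ⟨k⁻¹, ?_⟩) (List.cons_ne_nil _ _)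
      rw [map_inv, inv_eq_of_mul_eq_one_right heq]
    obtain ⟨b, g⟩ := β
    have hv : IsStrictlyReducedSyll φ (⟨b, φ b k * g⟩ :: t) :=
      hw.replace_head fun ⟨k', hk'⟩ => hw.2 _ List.mem_cons_self
        ⟨k⁻¹ * k', by rw [map_mul, hk', map_inv, inv_mul_cancel_left]⟩
    have hvprod : syllProd φ (⟨b, φ b k * g⟩ :: t) = syllProd φ (β' :: t') := by
      rw [← heq]
      simp [of_apply_eq_base, mul_assoc]
    obtain ⟨k', hk'⟩ := hv.exists_base_of_syllProd_cons_eq hinj hw' hvprod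
    have htail : base φ k' * syllProd φ t = syllProd φ t' := by
      simp only [syllProd_cons] at hvprod
      rw [hk', mul_assoc] at hvprod
      exact mul_left_cancel hvprod
    obtain ⟨hlen, γ, hγ0, hγ, hlink⟩ := ih hw.tail hw'.tail htail
    refine ⟨by simp [hlen], _, rfl, hγ, hlink.cons ?_⟩
    rw [hγ0, ← hk', map_mul, of_apply_eq_base]

lemma syllProd_ne_base (hinj : ∀ b, Function.Injective (φ b))
    {w : List ((b : Bool) × H b)} (hw : IsStrictlyReducedSyll φ w) {k : K} (hk : k ≠ 1) :
    syllProd φ w ≠ base φ k := by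
  intro h
  obtain rfl := hw.eq_nil_of_syllProd_mem_range hinj ⟨k, h.symm⟩
  exact hk ((map_eq_one_iff _ (base_injective hinj)).1 h.symm)

end IsStrictlyReducedSyll

namespace IsReducedSyll

lemma isStrictlyReducedSyll_or_eq_singleton_base {w : List ((b : Bool) × H b)}
    (hw : IsReducedSyll φ w) :
    IsStrictlyReducedSyll φ w ∨ ∃ b k, k ≠ 1 ∧ w = [⟨b, φ b k⟩] := by
  rcases hw with rfl | ⟨⟨b, g⟩, rfl, hg⟩ | hw
  · exact Or.inl ⟨List.isChain_nil, by simp⟩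
  · by_cases hr : g ∈ Set.range (φ b)
    · obtain ⟨k, rfl⟩ := hr
      exact Or.inr ⟨b, k, by rintro rfl; simp at hg, rfl⟩
    · exact Or.inl ⟨List.isChain_singleton _, by simpa using hr⟩
  · exact Or.inl hw

lemma syllProd_eq_one_iff (hinj : ∀ b, Function.Injective (φ b))
    {w : List ((b : Bool) × H b)} (hw : IsReducedSyll φ w) : syllProd φ w = 1 ↔ w = [] := by
  refine ⟨fun h => ?_, by rintro rfl; rfl⟩
  rcases hw.isStrictlyReducedSyll_or_eq_singleton_base with hs | ⟨b, k, hk, rfl⟩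
  · exact hs.eq_nil_of_syllProd_mem_range hinj (h ▸ one_mem _)
  · rw [syllProd_singleton_eq_base, map_eq_one_iff _ (base_injective hinj)] at h
    exact absurd h hk

end IsReducedSyll

end

theorem reduced_syllabic_expressions_unique
    {K : Type} [Group K] {H : Bool → Type} [∀ b, Group (H b)]
    (φ : ∀ b, K →* H b)
    (hinj : ∀ b, Function.Injective (φ b))
    (w w' : List ((b : Bool) × H b))
    (hw : IsReducedSyll φ w) (hw' : IsReducedSyll φ w')
    (heq : syllProd φ w = syllProd φ w') :
    w'.length = w.length
      ∧ (∃ γ : ℕ → K, γ 0 = 1 ∧ γ w.length = 1 ∧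
          ∀ i, i < w.length →
            PushoutI.of (φ := φ) (w'.getD i ⟨true, 1⟩).1 (w'.getD i ⟨true, 1⟩).2
                * PushoutI.base φ (γ (i + 1))
              = PushoutI.base φ (γ i)
                * PushoutI.of (φ := φ) (w.getD i ⟨true, 1⟩).1 (w.getD i ⟨true, 1⟩).2)
      ∧ (syllProd φ w = 1 ↔ w = []) := by
  rcases hw.isStrictlyReducedSyll_or_eq_singleton_base with hs | ⟨b, k, hk, rfl⟩ <;>
    rcases hw'.isStrictlyReducedSyll_or_eq_singleton_base with hs' | ⟨b', k', hk', rfl⟩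
  · obtain ⟨hlen, γ, hγ0, hγ, hlink⟩ :=
      hs.exists_syllablesLinkedBy hinj hs' (k := 1) (by rw [map_one, one_mul, heq])
    exact ⟨hlen, ⟨γ, hγ0, hγ, hlink⟩, hw.syllProd_eq_one_iff hinj⟩
  · exact absurd (heq.trans (syllProd_singleton_eq_base b' k')) (hs.syllProd_ne_base hinj hk')
  · exact absurd (heq.symm.trans (syllProd_singleton_eq_base b k)) (hs'.syllProd_ne_base hinj hk)
  · rw [syllProd_singleton_eq_base, syllProd_singleton_eq_base] at heq
    refine ⟨rfl, ⟨fun _ => 1, rfl, rfl, fun i hi => ?_⟩, hw.syllProd_eq_one_iff hinj⟩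
    obtain rfl := Nat.lt_one_iff.1 hi
    show of b' (φ b' k') * base φ 1 = base φ 1 * of b (φ b k)
    simp [of_apply_eq_base, heq]
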